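/- arXiv:2506.22912 — 4 statements merged into one kernel-verified Lean document; each statement's English description precedes it below -/
import Mathlib

section
/- There exists a function Ã : [0,1]^d × ℝ^d → M^{d×d} that is 1-periodic in its second argument (Ã(x, λ + e_i) = Ã(x, λ) for each standard basis vector e_i) such that (D_{L,m,ν}A^ε)(x) = Ã(x, x/(mε)) for all x ∈ [0,1)^d. Moreover, for each multi-index k = (k₁,…,k_d) with 1 ≤ k_i ≤ 1/L, the restriction of Ã to T_k × ℝ^d is C¹, where T_k := ∏_{i=1}^d [(k_i−1)L, k_iL); explicitly one may take Ã(x, λ) := A(φ_{L,m,ν}(x), λ + σ_k) for x ∈ T_k, where σ_k := (1/ε)(1 − 1/m)·Φ_{L,ν}(x) is the constant value of that expression on T_k. -/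
/-!
On each cell `T_k` the anchor `Φ_{L,ν}` is the constant `(k - 1 + ν) L`, so there the shrinkage
`φ_{L,m,ν}` is an affine map and the phase shift `σ_k = ε⁻¹ (1 - m⁻¹) Φ_{L,ν}(x)` is a constant
vector. Hence `Ã(x, λ) := A(φ(x), λ + σ(x))` is `A` composed with an affine map on `T_k × ℝ^d`,
it inherits periodicity in `λ` from `A`, and `x / (mε) + σ(x) = φ(x) / ε` is a ring identity.
-/

open Set

section TwoScaleLift

variable {d : ℕ} {M : Type*}

def twoScaleLift (A : (Fin d → ℝ) × (Fin d → ℝ) → M) (φ Φ : ℝ → ℝ) (s : ℝ) :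
    (Fin d → ℝ) × (Fin d → ℝ) → M :=
  fun p => A (fun i => φ (p.1 i), p.2 + s • fun i => Φ (p.1 i))

variable {A : (Fin d → ℝ) × (Fin d → ℝ) → M} {φ Φ : ℝ → ℝ} {s : ℝ}

theorem twoScaleLift_add_single
    (hA : ∀ (x lam : Fin d → ℝ) (i : Fin d), A (x, lam + Pi.single i 1) = A (x, lam))
    (x lam : Fin d → ℝ) (i : Fin d) :
    twoScaleLift A φ Φ s (x, lam + Pi.single i 1) = twoScaleLift A φ Φ s (x, lam) := by
  simp only [twoScaleLift, add_right_comm lam (Pi.single i 1)]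
  exact hA _ _ i

theorem twoScaleLift_apply_div {m ε : ℝ} (hφ : ∀ y, φ y = (1 / m) * (y - Φ y) + Φ y)
    (x : Fin d → ℝ) :
    twoScaleLift A φ Φ ((1 / ε) * (1 - 1 / m)) (x, fun i => x i / (m * ε)) =
      A (fun i => φ (x i), fun i => φ (x i) / ε) := by
  have h : ∀ i, x i / (m * ε) + (1 / ε) * (1 - 1 / m) * Φ (x i) = φ (x i) / ε := by
    intro i
    rw [hφ]
    ring
  simp only [twoScaleLift]
  congr 2
  funext i
  exact h i

theorem contDiffOn_twoScaleLift [NormedAddCommGroup M] [NormedSpace ℝ M] {n : WithTop ℕ∞}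
    {m : ℝ} (hA : ContDiff ℝ n A) (hφ : ∀ y, φ y = (1 / m) * (y - Φ y) + Φ y)
    {T : Set (Fin d → ℝ)} (c : Fin d → ℝ) (hc : ∀ x ∈ T, ∀ i, Φ (x i) = c i) :
    ContDiffOn ℝ n (twoScaleLift A φ Φ s) (T ×ˢ univ) := by
  have hAff : ContDiff ℝ n fun p : (Fin d → ℝ) × (Fin d → ℝ) =>
      A ((1 / m) • (p.1 - c) + c, p.2 + s • c) := by
    fun_prop
  refine hAff.contDiffOn.congr ?_
  rintro ⟨x, lam⟩ ⟨hx, -⟩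
  have hΦ : (fun i => Φ (x i)) = c := funext (hc x hx)
  simp only [twoScaleLift, hΦ]
  congr 2
  funext i
  simp [hφ, hc x hx i]

end TwoScaleLift

theorem anchor_eq_of_mem_Ico {L ν : ℝ} (hL : 0 < L) {Φ : ℝ → ℝ}
    (hΦ : ∀ y, Φ y = (⌊y / L⌋ + ν) * L) {k : ℤ} {y : ℝ}
    (hy : y ∈ Ico (((k : ℝ) - 1) * L) ((k : ℝ) * L)) :
    Φ y = ((k : ℝ) - 1 + ν) * L := by
  have hfloor : ⌊y / L⌋ = k - 1 := by
    rw [Int.floor_eq_iff, le_div_iff₀ hL, div_lt_iff₀ hL]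
    push_cast
    exact ⟨hy.1, by linarith [hy.2]⟩
  rw [hΦ, hfloor]
  push_cast
  ring

theorem dilated_coefficient_two_scale_representation_general
    (d : ℕ) (L m ν ε : ℝ) (hL : 0 < L)
    (A : (Fin d → ℝ) × (Fin d → ℝ) → Fin d → Fin d → ℝ)
    (hA : ContDiff ℝ 1 A)
    (hAper : ∀ (x lam : Fin d → ℝ) (i : Fin d), A (x, lam + Pi.single i 1) = A (x, lam))
    (Φ : ℝ → ℝ) (hΦ : ∀ y, Φ y = (⌊y / L⌋ + ν) * L)
    (φ : ℝ → ℝ) (hφ : ∀ y, φ y = (1 / m) * (y - Φ y) + Φ y) :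
    ∃ Atil : (Fin d → ℝ) × (Fin d → ℝ) → Fin d → Fin d → ℝ,
      (∀ (x lam : Fin d → ℝ) (i : Fin d),
        Atil (x, lam + Pi.single i 1) = Atil (x, lam)) ∧
      (∀ x : Fin d → ℝ, (∀ i, x i ∈ Set.Ico (0:ℝ) 1) →
        A (fun i => φ (x i), fun i => φ (x i) / ε) = Atil (x, fun i => x i / (m * ε))) ∧
      (∀ k : Fin d → ℤ, (∀ i, 1 ≤ k i ∧ (k i : ℝ) ≤ 1 / L) →
        ContDiffOn ℝ 1 Atil
          (({x : Fin d → ℝ | ∀ i, x i ∈ Set.Ico (((k i : ℝ) - 1) * L) ((k i : ℝ) * L)})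
            ×ˢ (Set.univ : Set (Fin d → ℝ)))) :=
  ⟨twoScaleLift A φ Φ ((1 / ε) * (1 - 1 / m)),
    twoScaleLift_add_single hAper,
    fun x _ => (twoScaleLift_apply_div hφ x).symm,
    fun k _ => contDiffOn_twoScaleLift hA hφ (fun i => ((k i : ℝ) - 1 + ν) * L)
      fun _ hx i => anchor_eq_of_mem_Ico hL hΦ (hx i)⟩

/-- (Representation of the dilated coefficient as a two-scale function.)
Let `A : [0,1]^d × ℝ^d → M^{d×d}` be `C¹` and 1-periodic in its second argument and
`A^ε(x) = A(x, x/ε)`. For the dilation operator `(D_{L,m,ν}B)(x) = B(φ_{L,m,ν}(x))`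
(with `φ` the componentwise shrinkage mapping), there exists `Ã`, 1-periodic in its
second argument, with `(D_{L,m,ν}A^ε)(x) = Ã(x, x/(mε))` on `[0,1)^d`, and such that
`Ã` restricted to `T_k × ℝ^d` is `C¹` for each multi-index `k` with `1 ≤ kᵢ ≤ 1/L`,
where `T_k = ∏ᵢ [(kᵢ−1)L, kᵢL)`. Matrices are encoded as elements of
`Fin d → Fin d → ℝ`. -/
theorem dilated_coefficient_two_scale_representation
    (d : ℕ) (L m ν ε : ℝ) (hL : 0 < L) (hLinv : ∃ n : ℕ, 0 < n ∧ (n : ℝ) * L = 1)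
    (hm : 1 < m) (hν : ν ∈ Set.Icc (0:ℝ) 1) (hε : 0 < ε)
    (A : (Fin d → ℝ) × (Fin d → ℝ) → Fin d → Fin d → ℝ)
    (hA : ContDiff ℝ 1 A)
    (hAper : ∀ (x lam : Fin d → ℝ) (i : Fin d), A (x, lam + Pi.single i 1) = A (x, lam))
    (Φ : ℝ → ℝ) (hΦ : ∀ y, Φ y = (⌊y / L⌋ + ν) * L)
    (φ : ℝ → ℝ) (hφ : ∀ y, φ y = (1 / m) * (y - Φ y) + Φ y) :
    ∃ Atil : (Fin d → ℝ) × (Fin d → ℝ) → Fin d → Fin d → ℝ,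
      (∀ (x lam : Fin d → ℝ) (i : Fin d),
        Atil (x, lam + Pi.single i 1) = Atil (x, lam)) ∧
      (∀ x : Fin d → ℝ, (∀ i, x i ∈ Set.Ico (0:ℝ) 1) →
        A (fun i => φ (x i), fun i => φ (x i) / ε) = Atil (x, fun i => x i / (m * ε))) ∧
      (∀ k : Fin d → ℤ, (∀ i, 1 ≤ k i ∧ (k i : ℝ) ≤ 1 / L) →
        ContDiffOn ℝ 1 Atil
          (({x : Fin d → ℝ | ∀ i, x i ∈ Set.Ico (((k i : ℝ) - 1) * L) ((k i : ℝ) * L)})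
            ×ˢ (Set.univ : Set (Fin d → ℝ)))) :=
  dilated_coefficient_two_scale_representation_general d L m ν ε hL A hA hAper Φ hΦ φ hφ
end

section
/- The function u satisfies u(0) = 0 and u(1) = 0; u is absolutely continuous with u'(x) = a(x)^{-1}(C − F(x)) for a.e. x; the flux a·u' = C − F is absolutely continuous; and −(a u')'(x) = f(x) for a.e. x ∈ [0,1]. That is, u is a solution of the two-point boundary value problem −(a u')' = f on [0,1] with homogeneous Dirichlet boundary conditions. -/
open Set MeasureTheory intervalIntegral



open Filter
open scoped Topology

lemma aux_ae_hasDerivAt_primitive {g : ℝ → ℝ} (hg : Integrable g (volume : Measure ℝ)) :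
    ∀ᵐ x : ℝ, HasDerivAt (fun t => ∫ s in (0:ℝ)..t, g s) (g x) x := by
  filter_upwards [VitaliFamily.ae_tendsto_average
    (IsUnifLocDoublingMeasure.vitaliFamily (volume : Measure ℝ) 1) hg.locallyIntegrable]
    with x hx
  set u : ℝ → ℝ := fun t => ∫ s in (0:ℝ)..t, g s with hudef
  have hI : ∀ c d : ℝ, u d - u c = ∫ s in c..d, g s := fun c d =>
    integral_interval_sub_left (hg.intervalIntegrable) (hg.intervalIntegrable)
  rw [hasDerivAt_iff_tendsto_slope, ← nhdsLT_sup_nhdsGT, tendsto_sup]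
  constructor
  · apply Tendsto.congr' _ (hx.comp (Real.tendsto_Icc_vitaliFamily_left x))
    filter_upwards [self_mem_nhdsWithin] with y (hy : y < x)
    show ⨍ s in Icc y x, g s = slope u x y
    rw [setAverage_eq, Real.volume_real_Icc_of_le hy.le, integral_Icc_eq_integral_Ioc,
      ← intervalIntegral.integral_of_le hy.le, slope_def_field, ← hI y x,
      smul_eq_mul]
    have hxy : x - y ≠ 0 := by linarith
    have hyx : y - x ≠ 0 := by linarith
    field_simp
    ring
  · apply Tendsto.congr' _ (hx.comp (Real.tendsto_Icc_vitaliFamily_right x))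
    filter_upwards [self_mem_nhdsWithin] with y (hy : x < y)
    show ⨍ s in Icc x y, g s = slope u x y
    rw [setAverage_eq, Real.volume_real_Icc_of_le hy.le, integral_Icc_eq_integral_Ioc,
      ← intervalIntegral.integral_of_le hy.le, slope_def_field, ← hI x y,
      smul_eq_mul]
    have hxy : y - x ≠ 0 := by linarith
    field_simp

/-- With `M ≥ 1`, `M⁻¹ ≤ a ≤ M` measurable, `f ∈ L²(0,1)`,
`F(x) = ∫₀ˣ f`, `C = (∫₀¹ F/a)/(∫₀¹ 1/a)` and `u(x) = ∫₀ˣ a⁻¹(C − F)`, the function `u`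
satisfies `u(0) = u(1) = 0`, is absolutely continuous with `u' = a⁻¹(C − F)` a.e.,
the flux `a u' = C − F` is absolutely continuous, and `−(a u')' = f` a.e. on `[0,1]`;
that is, `u` solves the two-point boundary value problem `−(a u')' = f` with
homogeneous Dirichlet conditions. -/
theorem explicit_solution_two_point_bvp
    (M : ℝ) (hM : 1 ≤ M)
    (a : ℝ → ℝ) (ha_meas : Measurable a)
    (ha : ∀ x ∈ Set.Icc (0:ℝ) 1, M⁻¹ ≤ a x ∧ a x ≤ M)
    (f : ℝ → ℝ) (hf_meas : Measurable f)
    (hf : MemLp f 2 (volume.restrict (Set.Icc (0:ℝ) 1)))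
    (F : ℝ → ℝ) (hF : ∀ x, F x = ∫ y in (0:ℝ)..x, f y)
    (C : ℝ) (hC : C = (∫ y in (0:ℝ)..1, F y / a y) / (∫ y in (0:ℝ)..1, 1 / a y))
    (u : ℝ → ℝ) (hu : ∀ x, u x = ∫ y in (0:ℝ)..x, (a y)⁻¹ * (C - F y)) :
    u 0 = 0 ∧ u 1 = 0 ∧
    ContinuousOn u (Set.Icc 0 1) ∧
    (∀ᵐ x ∂(volume.restrict (Set.Icc (0:ℝ) 1)),
      HasDerivAt u ((a x)⁻¹ * (C - F x)) x) ∧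
    (∀ x ∈ Set.Icc (0:ℝ) 1, a x * ((a x)⁻¹ * (C - F x)) = C - F x) ∧
    ContinuousOn (fun x => C - F x) (Set.Icc 0 1) ∧
    (∀ x ∈ Set.Icc (0:ℝ) 1, C - F x = (C - F 0) + ∫ y in (0:ℝ)..x, -(f y)) ∧
    (∀ᵐ x ∂(volume.restrict (Set.Icc (0:ℝ) 1)),
      HasDerivAt (fun y => C - F y) (-(f x)) x) := by
  haveI : IsFiniteMeasure (volume.restrict (Set.Icc (0:ℝ) 1)) := by
    constructor
    rw [Measure.restrict_apply_univ]
    simp [Real.volume_Icc]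
  have hMpos : (0:ℝ) < M := lt_of_lt_of_le one_pos hM
  have hapos : ∀ y ∈ Set.Icc (0:ℝ) 1, 0 < a y := fun y hy =>
    lt_of_lt_of_le (inv_pos.2 hMpos) (ha y hy).1
  have hainv_le : ∀ y ∈ Set.Icc (0:ℝ) 1, (a y)⁻¹ ≤ M := by
    intro y hy
    have h1 := inv_anti₀ (inv_pos.2 hMpos) (ha y hy).1
    simpa using h1
  have hainv_bound : ∀ᵐ y ∂(volume.restrict (Set.Icc (0:ℝ) 1)), ‖(a y)⁻¹‖ ≤ M := by
    rw [ae_restrict_iff' measurableSet_Icc]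
    filter_upwards with y hy
    rw [Real.norm_eq_abs, abs_of_pos (inv_pos.2 (hapos y hy))]
    exact hainv_le y hy
  -- f integrable on [0,1]
  have hf_int : IntegrableOn f (Set.Icc (0:ℝ) 1) volume := hf.integrable one_le_two
  set f' : ℝ → ℝ := (Set.Icc (0:ℝ) 1).indicator f with hf'def
  have hf'_int : Integrable f' volume := (integrable_indicator_iff measurableSet_Icc).2 hf_int
  -- F agrees on [0,1] with the primitive of f'
  have hFeq : ∀ x ∈ Set.Icc (0:ℝ) 1, F x = ∫ s in (0:ℝ)..x, f' s := by
    intro x hx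
    rw [hF]
    apply intervalIntegral.integral_congr
    intro s hs
    rw [Set.uIcc_of_le hx.1] at hs
    exact (Set.indicator_of_mem (Set.mem_Icc.2 ⟨hs.1, hs.2.trans hx.2⟩) f).symm
  have hFcont : ContinuousOn F (Set.Icc 0 1) := by
    have hc : Continuous fun t => ∫ s in (0:ℝ)..t, f' s :=
      intervalIntegral.continuous_primitive (fun c d => hf'_int.intervalIntegrable) 0
    exact hc.continuousOn.congr hFeq
  have hCFcont : ContinuousOn (fun y => C - F y) (Set.Icc 0 1) :=
    continuousOn_const.sub hFcont
  -- integrability of the various products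
  have hCF_int : IntegrableOn (fun y => C - F y) (Set.Icc (0:ℝ) 1) volume :=
    hCFcont.integrableOn_Icc
  have hg_int : IntegrableOn (fun y => (a y)⁻¹ * (C - F y)) (Set.Icc (0:ℝ) 1) volume :=
    Integrable.bdd_mul hCF_int (ha_meas.inv.aestronglyMeasurable.restrict) hainv_bound
  have hainv_int : IntegrableOn (fun y => (a y)⁻¹) (Set.Icc (0:ℝ) 1) volume := by
    have := Integrable.bdd_mul (g := fun _ => (1:ℝ))
      (integrable_const 1) (ha_meas.inv.aestronglyMeasurable.restrict) hainv_bound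
    simp only [mul_one] at this
    exact this
  have hFa_int : IntegrableOn (fun y => (a y)⁻¹ * F y) (Set.Icc (0:ℝ) 1) volume :=
    Integrable.bdd_mul (hFcont.integrableOn_Icc) (ha_meas.inv.aestronglyMeasurable.restrict)
      hainv_bound
  have hii : ∀ {h : ℝ → ℝ}, IntegrableOn h (Set.Icc (0:ℝ) 1) volume →
      IntervalIntegrable h volume 0 1 := by
    intro h hh
    apply IntegrableOn.intervalIntegrable
    rwa [Set.uIcc_of_le zero_le_one]
  -- positivity of ∫ a⁻¹
  have hIpos : 0 < ∫ y in (0:ℝ)..1, (a y)⁻¹ := by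
    have h1 : ∫ _ in (0:ℝ)..1, (M⁻¹:ℝ) ≤ ∫ y in (0:ℝ)..1, (a y)⁻¹ := by
      apply intervalIntegral.integral_mono_on zero_le_one intervalIntegrable_const
        (hii hainv_int)
      intro y hy
      exact inv_anti₀ (hapos y hy) (ha y hy).2
    have h2 : (0:ℝ) < ∫ _ in (0:ℝ)..1, (M⁻¹:ℝ) := by
      simp [inv_pos.2 hMpos]
    linarith
  -- u 1 = 0
  have hu1 : u 1 = 0 := by
    rw [hu]
    have hsplit : ∫ y in (0:ℝ)..1, (a y)⁻¹ * (C - F y)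
        = C * (∫ y in (0:ℝ)..1, (a y)⁻¹) - ∫ y in (0:ℝ)..1, (a y)⁻¹ * F y := by
      rw [← intervalIntegral.integral_const_mul,
        ← intervalIntegral.integral_sub (by simpa using (hii hainv_int).const_mul C)
          (hii hFa_int)]
      apply intervalIntegral.integral_congr
      intro y _
      ring
    have hone : ∫ y in (0:ℝ)..1, 1 / a y = ∫ y in (0:ℝ)..1, (a y)⁻¹ := by
      simp [one_div]
    have hJ : ∫ y in (0:ℝ)..1, F y / a y = ∫ y in (0:ℝ)..1, (a y)⁻¹ * F y := by
      apply intervalIntegral.integral_congr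
      intro y _
      show F y / a y = (a y)⁻¹ * F y
      rw [div_eq_mul_inv, mul_comm]
    rw [hsplit, hC, hone, hJ, div_mul_cancel₀ _ (ne_of_gt hIpos), sub_self]
  -- u agrees with the primitive of the truncated integrand
  set g' : ℝ → ℝ := (Set.Icc (0:ℝ) 1).indicator (fun y => (a y)⁻¹ * (C - F y)) with hg'def
  have hg'_int : Integrable g' volume := (integrable_indicator_iff measurableSet_Icc).2 hg_int
  have hueq : ∀ x ∈ Set.Icc (0:ℝ) 1, u x = ∫ s in (0:ℝ)..x, g' s := by
    intro x hx
    rw [hu]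
    apply intervalIntegral.integral_congr
    intro s hs
    rw [Set.uIcc_of_le hx.1] at hs
    rw [hg'def]
    exact (Set.indicator_of_mem (Set.mem_Icc.2 ⟨hs.1, hs.2.trans hx.2⟩)
      (fun y => (a y)⁻¹ * (C - F y))).symm
  have hucont : ContinuousOn u (Set.Icc 0 1) := by
    have hc : Continuous fun t => ∫ s in (0:ℝ)..t, g' s :=
      intervalIntegral.continuous_primitive (fun c d => hg'_int.intervalIntegrable) 0
    exact hc.continuousOn.congr hueq
  have hnotmem : ∀ᵐ x : ℝ, x ∉ ({0, 1} : Set ℝ) :=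
    ((Set.countable_singleton (1:ℝ)).insert 0).ae_notMem volume
  refine ⟨by rw [hu]; exact intervalIntegral.integral_same, hu1, hucont, ?_, ?_, hCFcont, ?_, ?_⟩
  · -- derivative of u
    rw [ae_restrict_iff' measurableSet_Icc]
    filter_upwards [aux_ae_hasDerivAt_primitive hg'_int, hnotmem] with x hx hx01 hxIcc
    have hx0 : x ≠ 0 := fun h => hx01 (by simp [h])
    have hx1 : x ≠ 1 := fun h => hx01 (by simp [h])
    have hxIoo : x ∈ Set.Ioo (0:ℝ) 1 := ⟨hxIcc.1.lt_of_ne (Ne.symm hx0), hxIcc.2.lt_of_ne hx1⟩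
    have hval : g' x = (a x)⁻¹ * (C - F x) := Set.indicator_of_mem hxIcc _
    rw [hval] at hx
    refine hx.congr_of_eventuallyEq ?_
    filter_upwards [isOpen_Ioo.mem_nhds hxIoo] with t ht
    exact hueq t (Set.Ioo_subset_Icc_self ht)
  · intro x hx
    have : a x ≠ 0 := ne_of_gt (hapos x hx)
    field_simp
  · intro x hx
    rw [intervalIntegral.integral_neg, ← hF x, hF 0, intervalIntegral.integral_same]
    ring
  · rw [ae_restrict_iff' measurableSet_Icc]
    filter_upwards [aux_ae_hasDerivAt_primitive hf'_int, hnotmem] with x hx hx01 hxIcc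
    have hx0 : x ≠ 0 := fun h => hx01 (by simp [h])
    have hx1 : x ≠ 1 := fun h => hx01 (by simp [h])
    have hxIoo : x ∈ Set.Ioo (0:ℝ) 1 := ⟨hxIcc.1.lt_of_ne (Ne.symm hx0), hxIcc.2.lt_of_ne hx1⟩
    have hval : f' x = f x := Set.indicator_of_mem hxIcc _
    rw [hval] at hx
    have hFd : HasDerivAt F (f x) x := by
      refine hx.congr_of_eventuallyEq ?_
      filter_upwards [isOpen_Ioo.mem_nhds hxIoo] with t ht
      exact hFeq t (Set.Ioo_subset_Icc_self ht)
    have h := (hasDerivAt_const x C).sub hFd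
    rw [zero_sub] at h
    exact h
end

section
/- On the interior of each interval Ω_j, u is twice differentiable with u'' = −f/a − (C − F)·a'/a², and the aggregated H² semi-norm of u satisfies |u|_{H²}† := (Σ_{j=1}^{1/L} ∫_{Ω_j} |u''|² dx)^{1/2} ≤ (M + M³ε^{-1} + M⁵ε^{-1})·‖f‖_{L²(0,1)}. Moreover ‖u‖_{L^∞(0,1)} ≤ M‖f‖_{L¹(0,1)} + M³‖f‖_{L²(0,1)} and ‖u'‖_{L^∞(0,1)} ≤ M‖f‖_{L¹(0,1)} + M³‖f‖_{L²(0,1)}. -/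
open Set MeasureTheory intervalIntegral

theorem my_primitive_ae_hasDerivAt (f : ℝ → ℝ) (hf : MeasureTheory.Integrable f) (c : ℝ) :
    ∀ᵐ x, HasDerivAt (fun y => ∫ t in c..y, f t) (f x) x := by
  have hloc : MeasureTheory.LocallyIntegrable f := hf.locallyIntegrable
  filter_upwards [(IsUnifLocDoublingMeasure.vitaliFamily (volume : Measure ℝ)
      1).ae_tendsto_average_norm_sub hloc] with x hx
  have key : ∀ y : ℝ, (∫ t in c..y, f t) - (∫ t in c..x, f t) = ∫ t in x..y, f t := fun y =>
    intervalIntegral.integral_interval_sub_left hf.intervalIntegrable hf.intervalIntegrable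
  rw [hasDerivAt_iff_tendsto_slope, ← nhdsLT_sup_nhdsGT, Filter.tendsto_sup]
  constructor
  · -- from the left
    have L := hx.comp (Real.tendsto_Icc_vitaliFamily_left x)
    rw [tendsto_iff_dist_tendsto_zero]
    refine squeeze_zero' (Filter.Eventually.of_forall fun _ => dist_nonneg) ?_ L
    filter_upwards [self_mem_nhdsWithin] with y (hy : y < x)
    have hxy : (0:ℝ) < x - y := by linarith
    have e1 : slope (fun y => ∫ t in c..y, f t) x y = (∫ t in y..x, f t) / (x - y) := by
      rw [slope_def_field, key y, intervalIntegral.integral_symm, neg_div, ← div_neg, neg_sub]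
    have e2 : (∫ t in y..x, f t) / (x - y) - f x
        = (∫ t in y..x, (f t - f x)) / (x - y) := by
      rw [intervalIntegral.integral_sub hf.intervalIntegrable intervalIntegrable_const,
        intervalIntegral.integral_const, smul_eq_mul]
      field_simp
    have hvol : (volume (Icc y x)).toReal = x - y := by
      rw [Real.volume_Icc, ENNReal.toReal_ofReal hxy.le]
    calc dist (slope (fun y => ∫ t in c..y, f t) x y) (f x)
        = |∫ t in y..x, (f t - f x)| / (x - y) := by
          rw [Real.dist_eq, e1, e2, abs_div, abs_of_pos hxy]
      _ ≤ (∫ t in y..x, |f t - f x|) / (x - y) := by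
          apply div_le_div_of_nonneg_right ?_ hxy.le |>.trans_eq rfl
          · exact intervalIntegral.abs_integral_le_integral_abs hy.le
      _ = ⨍ t in Icc y x, ‖f t - f x‖ := by
          rw [setAverage_eq, measureReal_def, hvol, smul_eq_mul, intervalIntegral.integral_of_le hy.le,
            ← integral_Icc_eq_integral_Ioc, div_eq_inv_mul]
          simp [Real.norm_eq_abs]
  · -- from the right
    have R := hx.comp (Real.tendsto_Icc_vitaliFamily_right x)
    rw [tendsto_iff_dist_tendsto_zero]
    refine squeeze_zero' (Filter.Eventually.of_forall fun _ => dist_nonneg) ?_ R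
    filter_upwards [self_mem_nhdsWithin] with y (hy : x < y)
    have hxy : (0:ℝ) < y - x := by linarith
    have e1 : slope (fun y => ∫ t in c..y, f t) x y = (∫ t in x..y, f t) / (y - x) := by
      rw [slope_def_field, key y]
    have e2 : (∫ t in x..y, f t) / (y - x) - f x
        = (∫ t in x..y, (f t - f x)) / (y - x) := by
      rw [intervalIntegral.integral_sub hf.intervalIntegrable intervalIntegrable_const,
        intervalIntegral.integral_const, smul_eq_mul]
      field_simp
    have hvol : (volume (Icc x y)).toReal = y - x := by
      rw [Real.volume_Icc, ENNReal.toReal_ofReal hxy.le]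
    calc dist (slope (fun y => ∫ t in c..y, f t) x y) (f x)
        = |∫ t in x..y, (f t - f x)| / (y - x) := by
          rw [Real.dist_eq, e1, e2, abs_div, abs_of_pos hxy]
      _ ≤ (∫ t in x..y, |f t - f x|) / (y - x) := by
          apply div_le_div_of_nonneg_right ?_ hxy.le |>.trans_eq rfl
          · exact intervalIntegral.abs_integral_le_integral_abs hy.le
      _ = ⨍ t in Icc x y, ‖f t - f x‖ := by
          rw [setAverage_eq, measureReal_def, hvol, smul_eq_mul, intervalIntegral.integral_of_le hy.le,
            ← integral_Icc_eq_integral_Ioc, div_eq_inv_mul]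
          simp [Real.norm_eq_abs]


set_option maxHeartbeats 2000000 in
/-- With `a` piecewise `C¹` on the meso-intervals `Ω_j = [(j−1)L, jL]`,
`M⁻¹ ≤ a ≤ M`, `|a'| ≤ M/ε` in the interior of each `Ω_j`, `f ∈ L²(0,1)`, and `u` the
explicit solution `u(x) = ∫₀ˣ a⁻¹(C − F)`: on the interior of each `Ω_j`, `u` is (a.e.)
twice differentiable with `u'' = −f/a − (C − F)a'/a²`; the aggregated `H²` semi-norm
satisfies `|u|_{H²}† ≤ (M + M³ε⁻¹ + M⁵ε⁻¹)‖f‖_{L²}`; and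
`‖u‖_∞, ‖u'‖_∞ ≤ M‖f‖_{L¹} + M³‖f‖_{L²}`. -/
theorem aggregated_H2_bound_for_explicit_solution
    (M L ε : ℝ) (hM : 1 ≤ M) (hε : 0 < ε)
    (n : ℕ) (hn : 0 < n) (hL : (n : ℝ) * L = 1)
    (a : ℝ → ℝ)
    (ha_pw : ∀ j ∈ Finset.Icc 1 n,
      ContDiffOn ℝ 1 a (Set.Icc (((j : ℝ) - 1) * L) ((j : ℝ) * L)))
    (ha_bounds : ∀ x ∈ Set.Icc (0:ℝ) 1, M⁻¹ ≤ a x ∧ a x ≤ M)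
    (ha_deriv : ∀ j ∈ Finset.Icc 1 n,
      ∀ x ∈ Set.Ioo (((j : ℝ) - 1) * L) ((j : ℝ) * L), |deriv a x| ≤ M / ε)
    (f : ℝ → ℝ) (hf_meas : Measurable f)
    (hf : MemLp f 2 (volume.restrict (Set.Icc (0:ℝ) 1)))
    (F : ℝ → ℝ) (hF : ∀ x, F x = ∫ y in (0:ℝ)..x, f y)
    (C : ℝ) (hC : C = (∫ y in (0:ℝ)..1, F y / a y) / (∫ y in (0:ℝ)..1, 1 / a y))
    (u : ℝ → ℝ) (hu : ∀ x, u x = ∫ y in (0:ℝ)..x, (a y)⁻¹ * (C - F y)) :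
    -- u is twice differentiable (a.e.) on the interior of each Ω_j with the stated u''
    (∀ j ∈ Finset.Icc 1 n,
      ∀ᵐ x ∂(volume.restrict (Set.Ioo (((j : ℝ) - 1) * L) ((j : ℝ) * L))),
        HasDerivAt u ((a x)⁻¹ * (C - F x)) x ∧
        HasDerivAt (fun y => (a y)⁻¹ * (C - F y))
          (-(f x) / a x - (C - F x) * deriv a x / (a x) ^ 2) x) ∧
    -- aggregated H² semi-norm bound
    Real.sqrt (∑ j ∈ Finset.Icc 1 n,
        ∫ x in Set.Ioo (((j : ℝ) - 1) * L) ((j : ℝ) * L),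
          (-(f x) / a x - (C - F x) * deriv a x / (a x) ^ 2) ^ 2)
      ≤ (M + M ^ 3 * ε⁻¹ + M ^ 5 * ε⁻¹) *
          Real.sqrt (∫ x in Set.Icc (0:ℝ) 1, (f x) ^ 2) ∧
    -- L^∞ bound on u
    (∀ x ∈ Set.Icc (0:ℝ) 1,
      |u x| ≤ M * (∫ y in Set.Icc (0:ℝ) 1, |f y|) +
        M ^ 3 * Real.sqrt (∫ y in Set.Icc (0:ℝ) 1, (f y) ^ 2)) ∧
    -- L^∞ bound on u' = a⁻¹(C − F)
    (∀ x ∈ Set.Icc (0:ℝ) 1,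
      |(a x)⁻¹ * (C - F x)| ≤ M * (∫ y in Set.Icc (0:ℝ) 1, |f y|) +
        M ^ 3 * Real.sqrt (∫ y in Set.Icc (0:ℝ) 1, (f y) ^ 2)) := by
  have hMpos : (0:ℝ) < M := lt_of_lt_of_le one_pos hM
  have hnR : (0:ℝ) < (n:ℝ) := by exact_mod_cast hn
  have hLpos : (0:ℝ) < L := by by_contra h; push_neg at h; nlinarith
  obtain rfl : u = fun x => ∫ y in (0:ℝ)..x, (a y)⁻¹ * (C - F y) := funext hu
  haveI hfin : IsFiniteMeasure (volume.restrict (Icc (0:ℝ) 1)) := by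
    constructor
    rw [Measure.restrict_apply_univ, Real.volume_Icc]
    exact ENNReal.ofReal_lt_top
  have hvol01 : (volume (Icc (0:ℝ) 1)).toReal = 1 := by simp [Real.volume_Icc]
  have hfi : IntegrableOn f (Icc (0:ℝ) 1) :=
    memLp_one_iff_integrable.mp (hf.mono_exponent (by norm_num))
  have habs : IntegrableOn (fun y => |f y|) (Icc (0:ℝ) 1) := hfi.abs
  have hf2 : IntegrableOn (fun x => f x ^ 2) (Icc (0:ℝ) 1) := hf.integrable_sq
  set N1 := ∫ y in Icc (0:ℝ) 1, |f y| with hN1def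
  set N2 := Real.sqrt (∫ x in Icc (0:ℝ) 1, f x ^ 2) with hN2def
  have hN1 : 0 ≤ N1 := integral_nonneg fun y => abs_nonneg _
  have hN2 : 0 ≤ N2 := Real.sqrt_nonneg _
  have hN2sq : N2 ^ 2 = ∫ x in Icc (0:ℝ) 1, f x ^ 2 :=
    Real.sq_sqrt (integral_nonneg fun y => sq_nonneg _)
  -- Cauchy-Schwarz : N1 ≤ N2
  have hN12 : N1 ≤ N2 := by
    have hconj : (2:ℝ).HolderConjugate 2 := ⟨by norm_num, by norm_num, by norm_num⟩
    have h2 : ENNReal.ofReal (2:ℝ) = 2 := by norm_num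
    have hfabs : MemLp (fun x => |f x|) (ENNReal.ofReal 2)
        (volume.restrict (Icc (0:ℝ) 1)) := by rw [h2]; exact hf.abs
    have hone : MemLp (fun _ : ℝ => (1:ℝ)) (ENNReal.ofReal 2)
        (volume.restrict (Icc (0:ℝ) 1)) := by rw [h2]; exact memLp_const 1
    have H := integral_mul_le_Lp_mul_Lq_of_nonneg hconj
      (Filter.Eventually.of_forall fun x => abs_nonneg (f x))
      (Filter.Eventually.of_forall fun _ => zero_le_one) hfabs hone
    have e1 : ∫ x in Icc (0:ℝ) 1, |f x| * 1 = N1 := by simp [hN1def]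
    have e2 : (∫ x in Icc (0:ℝ) 1, |f x| ^ (2:ℝ)) = ∫ x in Icc (0:ℝ) 1, f x ^ 2 :=
      integral_congr_ae (Filter.Eventually.of_forall fun x => by
        show |f x| ^ (2:ℝ) = f x ^ 2
        rw [show (2:ℝ) = ((2:ℕ):ℝ) by norm_num, Real.rpow_natCast, sq_abs])
    have e3 : (∫ _x in Icc (0:ℝ) 1, (1:ℝ) ^ (2:ℝ)) = 1 := by
      simp [Real.one_rpow, hvol01]
    rw [e1, e2, e3, Real.one_rpow, mul_one] at H
    calc N1 ≤ (∫ x in Icc (0:ℝ) 1, f x ^ 2) ^ ((1:ℝ)/2) := H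
      _ = N2 := by rw [hN2def, Real.sqrt_eq_rpow]
  -- covering the unit interval by the meso-intervals
  have subIcc : ∀ j ∈ Finset.Icc 1 n,
      Icc (((j:ℝ)-1)*L) ((j:ℝ)*L) ⊆ Icc (0:ℝ) 1 := by
    intro j hj x hx
    obtain ⟨h1, h2⟩ := Finset.mem_Icc.mp hj
    have hj1 : (1:ℝ) ≤ (j:ℝ) := by exact_mod_cast h1
    have hjn : ((j:ℝ)) ≤ (n:ℝ) := by exact_mod_cast h2
    constructor
    · nlinarith [hx.1, mul_nonneg (by linarith : (0:ℝ) ≤ (j:ℝ)-1) hLpos.le]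
    · nlinarith [hx.2, mul_le_mul_of_nonneg_right hjn hLpos.le]
  have hcovU : Icc (0:ℝ) 1 ⊆ ⋃ j ∈ Finset.Icc 1 n, Icc (((j:ℝ)-1)*L) ((j:ℝ)*L) := by
    intro x hx
    rcases eq_or_lt_of_le hx.1 with h0 | h0
    · refine Set.mem_biUnion (show (1:ℕ) ∈ Finset.Icc 1 n from Finset.mem_Icc.mpr ⟨le_rfl, hn⟩) ?_
      refine ⟨?_, ?_⟩ <;> push_cast <;> nlinarith [hLpos.le]
    · have hxL : 0 < x / L := div_pos h0 hLpos
      have hk1 : 0 < ⌈x / L⌉₊ := Nat.ceil_pos.mpr hxL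
      have hkn : ⌈x / L⌉₊ ≤ n := Nat.ceil_le.mpr ((div_le_iff₀ hLpos).mpr (by linarith [hx.2]))
      refine Set.mem_biUnion (Finset.mem_Icc.mpr ⟨hk1, hkn⟩) ?_
      constructor
      · have hlt : ((⌈x / L⌉₊ :ℝ) - 1) < x / L := by
          have h2 : (⌈x / L⌉₊ - 1 : ℕ) < ⌈x / L⌉₊ := Nat.sub_lt hk1 one_pos
          have h3 : ((⌈x / L⌉₊ - 1 : ℕ) : ℝ) < x / L := Nat.lt_ceil.mp h2
          calc ((⌈x / L⌉₊:ℝ) - 1) = ((⌈x / L⌉₊ - 1 : ℕ) : ℝ) := by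
                rw [Nat.cast_sub hk1]; push_cast; ring
            _ < x / L := h3
        have := (lt_div_iff₀ hLpos).mp hlt
        linarith
      · have h4 := Nat.le_ceil (x / L)
        have := (div_le_iff₀ hLpos).mp h4
        linarith
  have hdisj : (↑(Finset.Icc 1 n) : Set ℕ).Pairwise
      (Function.onFun Disjoint fun j => Ioo (((j:ℝ)-1)*L) ((j:ℝ)*L)) := by
    intro i _ j _ hij
    rcases lt_or_gt_of_ne hij with h | h
    · apply Set.disjoint_left.mpr
      intro x hxi hxj
      have hij' : (i:ℝ) + 1 ≤ (j:ℝ) := by exact_mod_cast h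
      have h2 : (i:ℝ)*L ≤ ((j:ℝ)-1)*L :=
        mul_le_mul_of_nonneg_right (by linarith) hLpos.le
      have := hxi.2; have := hxj.1
      simp only at *
      linarith
    · apply Set.disjoint_left.mpr
      intro x hxi hxj
      have hij' : (j:ℝ) + 1 ≤ (i:ℝ) := by exact_mod_cast h
      have h2 : (j:ℝ)*L ≤ ((i:ℝ)-1)*L :=
        mul_le_mul_of_nonneg_right (by linarith) hLpos.le
      have := hxi.1; have := hxj.2
      simp only at *
      linarith
  -- a is a.e. measurable on [0,1]
  have ha_aem : AEMeasurable a (volume.restrict (Icc (0:ℝ) 1)) := by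
    have h1 : AEMeasurable a
        (volume.restrict (⋃ j ∈ Finset.Icc 1 n, Icc (((j:ℝ)-1)*L) ((j:ℝ)*L))) := by
      have key : ∀ s : Finset ℕ,
          (∀ j ∈ s, ContDiffOn ℝ 1 a (Icc (((j:ℝ)-1)*L) ((j:ℝ)*L))) →
          AEMeasurable a (volume.restrict (⋃ j ∈ s, Icc (((j:ℝ)-1)*L) ((j:ℝ)*L))) := by
        intro s
        classical
        induction s using Finset.induction_on with
        | empty => intro _; simp [Measure.restrict_empty]
        | insert j s hj ih =>
          intro h
          rw [Finset.set_biUnion_insert, aemeasurable_union_iff]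
          exact ⟨(h _ (Finset.mem_insert_self _ _)).continuousOn.aemeasurable
              measurableSet_Icc,
            ih fun j hj' => h j (Finset.mem_insert_of_mem hj')⟩
      exact key _ ha_pw
    exact h1.mono_measure (Measure.restrict_mono hcovU le_rfl)
  -- the primitive G of the truncation of f
  set g : ℝ → ℝ := (Icc (0:ℝ) 1).indicator f with hgdef
  have hgint : Integrable g := (integrable_indicator_iff measurableSet_Icc).mpr hfi
  set G : ℝ → ℝ := fun x => ∫ t in (0:ℝ)..x, g t with hGdef
  have hG_cont : Continuous G :=
    intervalIntegral.continuous_primitive (fun _ _ => hgint.intervalIntegrable) 0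
  have hFG : ∀ y ∈ Icc (0:ℝ) 1, F y = G y := by
    intro y hy
    rw [hF y]
    refine intervalIntegral.integral_congr fun t ht => ?_
    rw [uIcc_of_le hy.1] at ht
    exact (Set.indicator_of_mem (show t ∈ Icc (0:ℝ) 1 from ⟨ht.1, ht.2.trans hy.2⟩) f).symm
  have hF_cont : ContinuousOn F (Icc (0:ℝ) 1) :=
    hG_cont.continuousOn.congr fun y hy => hFG y hy
  have hG_ae := my_primitive_ae_hasDerivAt g hgint 0
  -- basic bounds
  have hApos : ∀ x ∈ Icc (0:ℝ) 1, 0 < a x := fun x hx =>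
    lt_of_lt_of_le (inv_pos.mpr hMpos) (ha_bounds x hx).1
  have hAinv : ∀ x ∈ Icc (0:ℝ) 1, (a x)⁻¹ ≤ M := by
    intro x hx
    rw [← inv_inv M]
    exact inv_anti₀ (inv_pos.mpr hMpos) (ha_bounds x hx).1
  have hFy_bd : ∀ y ∈ Icc (0:ℝ) 1, |F y| ≤ N1 := by
    intro y hy
    rw [hF y]
    calc |∫ t in (0:ℝ)..y, f t| ≤ ∫ t in (0:ℝ)..y, |f t| :=
          intervalIntegral.abs_integral_le_integral_abs hy.1
      _ = ∫ t in Ioc (0:ℝ) y, |f t| := intervalIntegral.integral_of_le hy.1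
      _ ≤ N1 := setIntegral_mono_set habs
          (Filter.Eventually.of_forall fun t => abs_nonneg _)
          (HasSubset.Subset.eventuallyLE fun t ht => ⟨ht.1.le, ht.2.trans hy.2⟩)
  have hI1 : |∫ y in (0:ℝ)..1, F y / a y| ≤ M * N1 := by
    have hb : ∀ y ∈ Set.uIoc (0:ℝ) 1, ‖F y / a y‖ ≤ M * N1 := by
      intro y hy
      rw [Set.uIoc_of_le zero_le_one] at hy
      have hy' : y ∈ Icc (0:ℝ) 1 := ⟨hy.1.le, hy.2⟩
      rw [Real.norm_eq_abs, abs_div, abs_of_pos (hApos y hy'), div_eq_mul_inv]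
      calc |F y| * (a y)⁻¹ ≤ N1 * M :=
            mul_le_mul (hFy_bd y hy') (hAinv y hy') (inv_nonneg.mpr (hApos y hy').le) hN1
        _ = M * N1 := mul_comm _ _
    have := intervalIntegral.norm_integral_le_of_norm_le_const hb
    rw [Real.norm_eq_abs] at this
    simpa using this
  have hI2 : M⁻¹ ≤ ∫ y in (0:ℝ)..1, 1 / a y := by
    rw [intervalIntegral.integral_of_le zero_le_one]
    have hconst : ∫ _y in Ioc (0:ℝ) 1, (M:ℝ)⁻¹ = M⁻¹ := by simp [Real.volume_Ioc]
    rw [← hconst]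
    have hcint : IntegrableOn (fun _ : ℝ => (M:ℝ)⁻¹) (Ioc (0:ℝ) 1) :=
      (integrable_const _).mono_measure (Measure.restrict_mono Ioc_subset_Icc_self le_rfl)
    have haem' : AEMeasurable a (volume.restrict (Ioc (0:ℝ) 1)) :=
      ha_aem.mono_measure (Measure.restrict_mono Ioc_subset_Icc_self le_rfl)
    have hint : IntegrableOn (fun y => 1 / a y) (Ioc (0:ℝ) 1) := by
      refine Integrable.mono'
        ((integrable_const M).mono_measure (Measure.restrict_mono Ioc_subset_Icc_self le_rfl))
        (aemeasurable_const.div haem').aestronglyMeasurable ?_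
      filter_upwards [ae_restrict_mem measurableSet_Ioc] with x hx
      have hx' : x ∈ Icc (0:ℝ) 1 := ⟨hx.1.le, hx.2⟩
      rw [Real.norm_eq_abs, abs_div, abs_one, abs_of_pos (hApos x hx'), one_div]
      exact hAinv x hx'
    refine setIntegral_mono_on hcint hint measurableSet_Ioc ?_
    intro x hx
    have hx' : x ∈ Icc (0:ℝ) 1 := ⟨hx.1.le, hx.2⟩
    rw [one_div]
    exact inv_anti₀ (hApos x hx') (ha_bounds x hx').2
  have hI2pos : 0 < ∫ y in (0:ℝ)..1, 1 / a y := lt_of_lt_of_le (inv_pos.mpr hMpos) hI2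
  have hC_bd : |C| ≤ M^2 * N1 := by
    rw [hC, abs_div, abs_of_pos hI2pos]
    calc |∫ y in (0:ℝ)..1, F y / a y| / (∫ y in (0:ℝ)..1, 1 / a y)
        ≤ (M*N1) / M⁻¹ := div_le_div₀ (mul_nonneg hMpos.le hN1) hI1 (inv_pos.mpr hMpos) hI2
      _ = M^2 * N1 := by rw [div_eq_mul_inv, inv_inv]; ring
  -- the first-derivative function and its bounds
  have hhb : ∀ x ∈ Icc (0:ℝ) 1, |(a x)⁻¹ * (C - F x)| ≤ M * (M^2*N1 + N1) := by
    intro x hx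
    rw [abs_mul, abs_inv, abs_of_pos (hApos x hx)]
    have h2 : |C - F x| ≤ M^2*N1 + N1 :=
      (abs_sub C (F x)).trans (add_le_add hC_bd (hFy_bd x hx))
    exact mul_le_mul (hAinv x hx) h2 (abs_nonneg _) hMpos.le
  have hB2 : M * (M^2*N1 + N1) ≤ M * N1 + M ^ 3 * N2 := by
    nlinarith [mul_le_mul_of_nonneg_left hN12 (by positivity : (0:ℝ) ≤ M^3)]
  have hF_aem : AEMeasurable F (volume.restrict (Icc (0:ℝ) 1)) :=
    hF_cont.aemeasurable measurableSet_Icc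
  have hh_aesm : AEStronglyMeasurable (fun y => (a y)⁻¹ * (C - F y))
      (volume.restrict (Icc (0:ℝ) 1)) :=
    (ha_aem.inv.mul (aemeasurable_const.sub hF_aem)).aestronglyMeasurable
  have hh_int : IntegrableOn (fun y => (a y)⁻¹ * (C - F y)) (Icc (0:ℝ) 1) := by
    refine Integrable.mono' (integrable_const (M * (M^2*N1 + N1))) hh_aesm ?_
    filter_upwards [ae_restrict_mem measurableSet_Icc] with x hx
    rw [Real.norm_eq_abs]
    exact hhb x hx
  have hh_ii : ∀ x ∈ Icc (0:ℝ) 1,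
      IntervalIntegrable (fun y => (a y)⁻¹ * (C - F y)) volume 0 x := by
    intro x hx
    apply (hh_int.mono_set ?_).intervalIntegrable
    rw [uIcc_of_le hx.1]
    exact Icc_subset_Icc le_rfl hx.2
  refine ⟨?_, ?_, ?_, ?_⟩
  · -- Part 1 : differentiability
    intro j hj
    have hsubI : Ioo (((j:ℝ)-1)*L) ((j:ℝ)*L) ⊆ Icc (0:ℝ) 1 := fun x hx =>
      subIcc j hj (Ioo_subset_Icc_self hx)
    have hsubO : Ioo (((j:ℝ)-1)*L) ((j:ℝ)*L) ⊆ Ioo (0:ℝ) 1 := by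
      obtain ⟨h1, h2⟩ := Finset.mem_Icc.mp hj
      have hj1 : (1:ℝ) ≤ (j:ℝ) := by exact_mod_cast h1
      have hjn : ((j:ℝ)) ≤ (n:ℝ) := by exact_mod_cast h2
      intro x hx
      constructor
      · nlinarith [hx.1, mul_nonneg (by linarith : (0:ℝ) ≤ (j:ℝ)-1) hLpos.le]
      · nlinarith [hx.2, mul_le_mul_of_nonneg_right hjn hLpos.le]
    have hContOn : ContinuousOn (fun y => (a y)⁻¹ * (C - F y))
        (Ioo (((j:ℝ)-1)*L) ((j:ℝ)*L)) := by
      have haC : ContinuousOn a (Ioo (((j:ℝ)-1)*L) ((j:ℝ)*L)) :=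
        (ha_pw j hj).continuousOn.mono Ioo_subset_Icc_self
      have hFC : ContinuousOn F (Ioo (((j:ℝ)-1)*L) ((j:ℝ)*L)) := hF_cont.mono hsubI
      exact (haC.inv₀ fun x hx => (hApos x (hsubI hx)).ne').mul (continuousOn_const.sub hFC)
    filter_upwards [ae_restrict_of_ae hG_ae, ae_restrict_mem measurableSet_Ioo] with x hxG hxI
    have hx01 : x ∈ Icc (0:ℝ) 1 := hsubI hxI
    have hFx : HasDerivAt F (f x) x := by
      have hnh : Ioo (0:ℝ) 1 ∈ nhds x := isOpen_Ioo.mem_nhds (hsubO hxI)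
      have heq : F =ᶠ[nhds x] G :=
        Filter.eventuallyEq_of_mem hnh fun y hy => hFG y (Ioo_subset_Icc_self hy)
      have h5 := hxG.congr_of_eventuallyEq heq
      have h6 : g x = f x := Set.indicator_of_mem hx01 f
      rwa [h6] at h5
    constructor
    · exact intervalIntegral.integral_hasDerivAt_right (hh_ii x hx01)
        (hContOn.stronglyMeasurableAtFilter isOpen_Ioo x hxI)
        (hContOn.continuousAt (isOpen_Ioo.mem_nhds hxI))
    · have hIccNhd : Icc (((j:ℝ)-1)*L) ((j:ℝ)*L) ∈ nhds x :=
        Filter.mem_of_superset (isOpen_Ioo.mem_nhds hxI) Ioo_subset_Icc_self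
      have hda : HasDerivAt a (deriv a x) x :=
        ((((ha_pw j hj).differentiableOn one_ne_zero) x (Ioo_subset_Icc_self hxI)).differentiableAt
          hIccNhd).hasDerivAt
      have hne : a x ≠ 0 := (hApos x hx01).ne'
      have h1 : HasDerivAt (fun y => (a y)⁻¹) (-(deriv a x) / (a x)^2) x := hda.inv hne
      have h2 : HasDerivAt (fun y => C - F y) (-(f x)) x := hFx.const_sub C
      have h3 : HasDerivAt (fun y => (a y)⁻¹ * (C - F y))
          (-(deriv a x) / (a x)^2 * (C - F x) + (a x)⁻¹ * -(f x)) x := h1.mul h2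
      convert h3 using 1
      field_simp
      ring
  · -- Part 2 : aggregated H² bound
    set K := (M^3 + M^5) * ε⁻¹ * N1 with hKdef
    have hK : 0 ≤ K := mul_nonneg (mul_nonneg (by positivity) (by positivity)) hN1
    have hw_bd : ∀ j ∈ Finset.Icc 1 n, ∀ x ∈ Ioo (((j:ℝ)-1)*L) ((j:ℝ)*L),
        |(-(f x) / a x - (C - F x) * deriv a x / (a x)^2)| ≤ M * |f x| + K := by
      intro j hj x hx
      have hx01 : x ∈ Icc (0:ℝ) 1 := subIcc j hj (Ioo_subset_Icc_self hx)
      have hap : 0 < a x := hApos x hx01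
      have hinv : (a x)⁻¹ ≤ M := hAinv x hx01
      have hinv2 : ((a x)^2)⁻¹ ≤ M^2 := by
        rw [← inv_pow]
        exact pow_le_pow_left₀ (inv_nonneg.mpr hap.le) hinv 2
      have hd : |deriv a x| ≤ M / ε := ha_deriv j hj x hx
      have hCF : |C - F x| ≤ M^2*N1 + N1 :=
        (abs_sub C (F x)).trans (add_le_add hC_bd (hFy_bd x hx01))
      have hCFnn : (0:ℝ) ≤ M^2*N1 + N1 :=
        add_nonneg (mul_nonneg (by positivity) hN1) hN1
      have t1 : |(-(f x)) / a x| ≤ M * |f x| := by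
        rw [abs_div, abs_neg, abs_of_pos hap, div_eq_mul_inv]
        calc |f x| * (a x)⁻¹ ≤ |f x| * M :=
              mul_le_mul_of_nonneg_left hinv (abs_nonneg _)
          _ = M * |f x| := mul_comm _ _
      have t2 : |(C - F x) * deriv a x / (a x)^2| ≤ K := by
        rw [abs_div, abs_mul, abs_of_pos (pow_pos hap 2), div_eq_mul_inv]
        calc |C - F x| * |deriv a x| * ((a x)^2)⁻¹
            ≤ (M^2*N1+N1) * (M/ε) * M^2 := by
              refine mul_le_mul (mul_le_mul hCF hd (abs_nonneg _) hCFnn) hinv2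
                (inv_nonneg.mpr (pow_pos hap 2).le)
                (mul_nonneg hCFnn (by positivity))
          _ = K := by rw [hKdef]; field_simp; ring
      calc |(-(f x) / a x - (C - F x) * deriv a x / (a x)^2)|
          ≤ |(-(f x)) / a x| + |(C - F x) * deriv a x / (a x)^2| := abs_sub _ _
        _ ≤ M * |f x| + K := add_le_add t1 t2
    have hφ_eq : ∀ x:ℝ, (M*|f x| + K)^2 = M^2 * f x^2 + ((2*M*K)*|f x| + K^2) := by
      intro x
      have h := sq_abs (f x)
      nlinarith [h]
    have hφ_int : IntegrableOn (fun x => (M*|f x| + K)^2) (Icc (0:ℝ) 1) := by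
      have he : (fun x => (M*|f x| + K)^2)
          = fun x => M^2 * f x^2 + ((2*M*K)*|f x| + K^2) := funext hφ_eq
      rw [he]
      exact (hf2.const_mul _).add ((habs.const_mul _).add (integrable_const _))
    have hw_int : ∀ j ∈ Finset.Icc 1 n,
        IntegrableOn (fun x => (-(f x)/a x - (C - F x)*deriv a x/(a x)^2)^2)
          (Ioo (((j:ℝ)-1)*L) ((j:ℝ)*L)) := by
      intro j hj
      have hsubI : Ioo (((j:ℝ)-1)*L) ((j:ℝ)*L) ⊆ Icc (0:ℝ) 1 := fun x hx =>
        subIcc j hj (Ioo_subset_Icc_self hx)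
      have ha' : AEMeasurable a (volume.restrict (Ioo (((j:ℝ)-1)*L) ((j:ℝ)*L))) :=
        ha_aem.mono_measure (Measure.restrict_mono hsubI le_rfl)
      have hF' : AEMeasurable F (volume.restrict (Ioo (((j:ℝ)-1)*L) ((j:ℝ)*L))) :=
        hF_aem.mono_measure (Measure.restrict_mono hsubI le_rfl)
      have hd' : AEMeasurable (deriv a) (volume.restrict (Ioo (((j:ℝ)-1)*L) ((j:ℝ)*L))) :=
        (measurable_deriv a).aemeasurable
      have haem : AEMeasurable (fun x => (-(f x)/a x - (C - F x)*deriv a x/(a x)^2)^2)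
          (volume.restrict (Ioo (((j:ℝ)-1)*L) ((j:ℝ)*L))) :=
        (((hf_meas.aemeasurable.neg.div ha').sub
          (((aemeasurable_const.sub hF').mul hd').div (ha'.pow_const 2))).pow_const 2)
      refine Integrable.mono' (hφ_int.mono_set hsubI) haem.aestronglyMeasurable ?_
      filter_upwards [ae_restrict_mem measurableSet_Ioo] with x hx
      have hb := hw_bd j hj x hx
      rw [Real.norm_eq_abs, abs_of_nonneg (sq_nonneg _)]
      calc (-(f x)/a x - (C - F x)*deriv a x/(a x)^2)^2
          = |(-(f x)/a x - (C - F x)*deriv a x/(a x)^2)|^2 := (sq_abs _).symm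
        _ ≤ (M*|f x|+K)^2 := pow_le_pow_left₀ (abs_nonneg _) hb 2
    have hint_le : ∀ j ∈ Finset.Icc 1 n,
        (∫ x in Ioo (((j:ℝ)-1)*L) ((j:ℝ)*L),
          (-(f x)/a x - (C - F x)*deriv a x/(a x)^2)^2)
        ≤ ∫ x in Ioo (((j:ℝ)-1)*L) ((j:ℝ)*L), (M*|f x| + K)^2 := by
      intro j hj
      have hsubI : Ioo (((j:ℝ)-1)*L) ((j:ℝ)*L) ⊆ Icc (0:ℝ) 1 := fun x hx =>
        subIcc j hj (Ioo_subset_Icc_self hx)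
      refine setIntegral_mono_on (hw_int j hj) (hφ_int.mono_set hsubI) measurableSet_Ioo ?_
      intro x hx
      have hb := hw_bd j hj x hx
      calc (-(f x)/a x - (C - F x)*deriv a x/(a x)^2)^2
          = |(-(f x)/a x - (C - F x)*deriv a x/(a x)^2)|^2 := (sq_abs _).symm
        _ ≤ (M*|f x|+K)^2 := pow_le_pow_left₀ (abs_nonneg _) hb 2
    have hUsub : (⋃ j ∈ Finset.Icc 1 n, Ioo (((j:ℝ)-1)*L) ((j:ℝ)*L)) ⊆ Icc (0:ℝ) 1 :=
      Set.iUnion₂_subset fun j hj => (Ioo_subset_Icc_self).trans (subIcc j hj)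
    have hsum : (∑ j ∈ Finset.Icc 1 n, ∫ x in Ioo (((j:ℝ)-1)*L) ((j:ℝ)*L),
        (-(f x)/a x - (C - F x)*deriv a x/(a x)^2)^2) ≤ (M*N2+K)^2 := by
      have step1 := Finset.sum_le_sum hint_le
      have step2 : (∑ j ∈ Finset.Icc 1 n, ∫ x in Ioo (((j:ℝ)-1)*L) ((j:ℝ)*L), (M*|f x| + K)^2)
          = ∫ x in ⋃ j ∈ Finset.Icc 1 n, Ioo (((j:ℝ)-1)*L) ((j:ℝ)*L), (M*|f x| + K)^2 :=
        (integral_biUnion_finset (Finset.Icc 1 n) (fun j _ => measurableSet_Ioo) hdisj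
          (fun j hj => hφ_int.mono_set ((Ioo_subset_Icc_self).trans (subIcc j hj)))).symm
      have step3 : (∫ x in ⋃ j ∈ Finset.Icc 1 n, Ioo (((j:ℝ)-1)*L) ((j:ℝ)*L), (M*|f x| + K)^2)
          ≤ ∫ x in Icc (0:ℝ) 1, (M*|f x| + K)^2 :=
        setIntegral_mono_set hφ_int
          (Filter.Eventually.of_forall fun x => sq_nonneg _)
          (HasSubset.Subset.eventuallyLE hUsub)
      have step4 : (∫ x in Icc (0:ℝ) 1, (M*|f x| + K)^2)
          = M^2 * (∫ x in Icc (0:ℝ) 1, f x ^ 2) + ((2*M*K)*N1 + K^2) := by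
        have he : (fun x => (M*|f x| + K)^2)
            = fun x => M^2 * f x^2 + ((2*M*K)*|f x| + K^2) := funext hφ_eq
        have hg0 : Integrable (fun x => M^2 * f x^2) (volume.restrict (Icc (0:ℝ) 1)) :=
          hf2.const_mul _
        have hg2 : Integrable (fun x => (2*M*K)*|f x|) (volume.restrict (Icc (0:ℝ) 1)) :=
          habs.const_mul _
        have hg3 : Integrable (fun _ : ℝ => K^2) (volume.restrict (Icc (0:ℝ) 1)) :=
          integrable_const _
        have hg1 : Integrable (fun x => (2*M*K)*|f x| + K^2)
            (volume.restrict (Icc (0:ℝ) 1)) := hg2.add hg3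
        rw [he, integral_add hg0 hg1, integral_add hg2 hg3,
          MeasureTheory.integral_const_mul, MeasureTheory.integral_const_mul,
          setIntegral_const, measureReal_def, hvol01, one_smul, ← hN1def]
      have hfin2 : M^2 * (∫ x in Icc (0:ℝ) 1, f x ^ 2) + ((2*M*K)*N1 + K^2) ≤ (M*N2+K)^2 := by
        rw [← hN2sq]
        nlinarith [mul_le_mul_of_nonneg_left hN12 (mul_nonneg hMpos.le hK)]
      calc (∑ j ∈ Finset.Icc 1 n, ∫ x in Ioo (((j:ℝ)-1)*L) ((j:ℝ)*L),
            (-(f x)/a x - (C - F x)*deriv a x/(a x)^2)^2)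
          ≤ ∑ j ∈ Finset.Icc 1 n, ∫ x in Ioo (((j:ℝ)-1)*L) ((j:ℝ)*L), (M*|f x| + K)^2 := step1
        _ = ∫ x in ⋃ j ∈ Finset.Icc 1 n, Ioo (((j:ℝ)-1)*L) ((j:ℝ)*L), (M*|f x| + K)^2 := step2
        _ ≤ ∫ x in Icc (0:ℝ) 1, (M*|f x| + K)^2 := step3
        _ = M^2 * (∫ x in Icc (0:ℝ) 1, f x ^ 2) + ((2*M*K)*N1 + K^2) := step4
        _ ≤ (M*N2+K)^2 := hfin2
    calc Real.sqrt (∑ j ∈ Finset.Icc 1 n, ∫ x in Ioo (((j:ℝ)-1)*L) ((j:ℝ)*L),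
          (-(f x)/a x - (C - F x)*deriv a x/(a x)^2)^2)
        ≤ Real.sqrt ((M*N2+K)^2) := Real.sqrt_le_sqrt hsum
      _ = M*N2 + K := Real.sqrt_sq (add_nonneg (mul_nonneg hMpos.le hN2) hK)
      _ ≤ (M + M ^ 3 * ε⁻¹ + M ^ 5 * ε⁻¹) * N2 := by
        have hKle : K ≤ (M^3*ε⁻¹ + M^5*ε⁻¹) * N2 := by
          rw [hKdef]
          have h7 := mul_le_mul_of_nonneg_left hN12
            (by positivity : (0:ℝ) ≤ (M^3+M^5)*ε⁻¹)
          nlinarith [h7]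
        nlinarith [hKle]
  · -- Part 3 : sup bound on u
    intro x hx
    have hb : ∀ y ∈ Set.uIoc (0:ℝ) x, ‖(a y)⁻¹ * (C - F y)‖ ≤ M * (M^2*N1 + N1) := by
      intro y hy
      rw [Set.uIoc_of_le hx.1] at hy
      exact (Real.norm_eq_abs _).le.trans_eq' rfl |>.trans (hhb y ⟨hy.1.le, hy.2.trans hx.2⟩)
    have h1 := intervalIntegral.norm_integral_le_of_norm_le_const hb
    rw [Real.norm_eq_abs] at h1
    have hx1 : |x - 0| ≤ 1 := by rw [sub_zero, abs_of_nonneg hx.1]; exact hx.2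
    have hBnn : (0:ℝ) ≤ M * (M^2*N1 + N1) :=
      mul_nonneg hMpos.le (add_nonneg (mul_nonneg (by positivity) hN1) hN1)
    calc |∫ y in (0:ℝ)..x, (a y)⁻¹ * (C - F y)| ≤ M * (M^2*N1 + N1) * |x - 0| := h1
      _ ≤ M * (M^2*N1 + N1) * 1 := mul_le_mul_of_nonneg_left hx1 hBnn
      _ = M * (M^2*N1 + N1) := mul_one _
      _ ≤ M * N1 + M ^ 3 * N2 := hB2
  · -- Part 4 : sup bound on u'
    intro x hx
    exact (hhb x hx).trans hB2
end

section
/- For an aligned configuration, the piecewise-linear interpolation error satisfies ‖u − I_h u‖_{H¹(0,1)} ≤ √(h⁴ + h²)·|u|_{H²}†, where |u|_{H²}† := (Σ_{j=1}^{1/L} ∫_{Ω_j} |u''|² dx)^{1/2} is the aggregated H² semi-norm and ‖v‖_{H¹(0,1)}² := ‖v‖²_{L²(0,1)} + ‖v'‖²_{L²(0,1)}. -/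
open Set MeasureTheory intervalIntegral

private lemma ii_of_subIoo {f : ℝ → ℝ} {C D a b : ℝ} (hf : IntegrableOn f (Ioo C D))
    (hCa : C ≤ a) (hab : a ≤ b) (hbD : b ≤ D) : IntervalIntegrable f volume a b := by
  rw [intervalIntegrable_iff, uIoc_of_le hab]
  exact ((integrableOn_Ioc_iff_integrableOn_Ioo (f := f) (a := C) (b := D)).2 hf).mono_set (Ioc_subset_Ioc hCa hbD)

private lemma cs_lemma {w : ℝ → ℝ} {a b : ℝ} (hab : a ≤ b)
    (hwi : IntervalIntegrable w volume a b)
    (hws : IntervalIntegrable (fun x => w x ^ 2) volume a b) :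
    ∫ x in a..b, |w x| ≤ Real.sqrt (b - a) * Real.sqrt (∫ x in a..b, w x ^ 2) := by
  rw [integral_of_le hab, integral_of_le hab]
  set μ := volume.restrict (Ioc a b) with hμ
  haveI : IsFiniteMeasure μ := by
    constructor
    rw [hμ, Measure.restrict_apply_univ]
    exact measure_Ioc_lt_top
  have hpq : Real.HolderConjugate 2 2 := Real.HolderConjugate.two_two
  have hwm : AEStronglyMeasurable w μ := hwi.1.aestronglyMeasurable
  have hmem : MemLp (fun x => |w x|) (ENNReal.ofReal 2) μ := by
    have h2 : (ENNReal.ofReal 2) = 2 := by norm_num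
    rw [h2]
    have habs : AEStronglyMeasurable (fun x => |w x|) μ := by
      simpa [Real.norm_eq_abs] using hwm.norm
    refine (memLp_two_iff_integrable_sq habs).2 ?_
    have heq : (fun x => |w x| ^ 2) = fun x => w x ^ 2 := by
      funext x; exact sq_abs _
    rw [heq]
    exact hws.1
  have hone : MemLp (fun _ : ℝ => (1 : ℝ)) (ENNReal.ofReal 2) μ := memLp_const 1
  have hH := integral_mul_le_Lp_mul_Lq_of_nonneg (μ := μ) hpq
    (Filter.Eventually.of_forall fun x => abs_nonneg (w x))
    (Filter.Eventually.of_forall fun _ => zero_le_one) hmem hone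
  simp only [mul_one] at hH
  calc ∫ x in Ioc a b, |w x| ≤
      (∫ x in Ioc a b, |w x| ^ (2:ℝ)) ^ (1/(2:ℝ)) * (∫ _x in Ioc a b, (1:ℝ) ^ (2:ℝ)) ^ (1/(2:ℝ)) :=
        hH
    _ = Real.sqrt (b - a) * Real.sqrt (∫ x in Ioc a b, w x ^ 2) := by
        have h1 : (fun x : ℝ => |w x| ^ (2:ℝ)) = fun x => w x ^ 2 := by
          funext x
          rw [show ((2:ℝ)) = ((2:ℕ):ℝ) by norm_num, Real.rpow_natCast]
          exact sq_abs _
        have h2 : (∫ _x in Ioc a b, (1:ℝ) ^ (2:ℝ)) = b - a := by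
          simp [Real.volume_Ioc, ENNReal.toReal_ofReal (sub_nonneg.2 hab), hab]
        rw [h1, h2, ← Real.sqrt_eq_rpow, ← Real.sqrt_eq_rpow, mul_comm]

private lemma cell_bound {u v w : ℝ → ℝ} {a b : ℝ} (hab : a < b)
    (hu : ∀ x ∈ Icc a b, HasDerivAt u (v x) x)
    (hvc : ContinuousOn v (Icc a b))
    (hrep : ∀ x ∈ Icc a b, ∀ y ∈ Icc a b, v y - v x = ∫ t in x..y, w t)
    (hwi : IntervalIntegrable w volume a b)
    (hws : IntervalIntegrable (fun x => w x ^ 2) volume a b) :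
    ∫ x in a..b, ((u x - (u a + (x - a) * ((u b - u a) / (b - a)))) ^ 2 +
        (v x - (u b - u a) / (b - a)) ^ 2)
      ≤ ((b - a) ^ 4 + (b - a) ^ 2) * ∫ x in a..b, w x ^ 2 := by
  set c := (u b - u a) / (b - a) with hc
  set S := ∫ x in a..b, w x ^ 2 with hS
  have hS0 : 0 ≤ S := intervalIntegral.integral_nonneg hab.le fun x _ => sq_nonneg _
  have hba0 : 0 ≤ b - a := sub_nonneg.2 hab.le
  have hucont : ContinuousOn u (Icc a b) := fun x hx => (hu x hx).continuousAt.continuousWithinAt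
  have habs : ∫ x in a..b, |w x| ≤ Real.sqrt (b - a) * Real.sqrt S := cs_lemma hab.le hwi hws
  set W : ℝ → ℝ := fun t => |w t| with hW
  have key : ∀ x ∈ Icc a b, ∀ y ∈ Icc a b,
      |∫ t in x..y, w t| ≤ Real.sqrt ((b - a) * S) := by
    intro x hx y hy
    have h1 : |∫ t in x..y, w t| ≤ |∫ t in x..y, W t| := by
      simpa [hW, Real.norm_eq_abs] using
        intervalIntegral.norm_integral_le_abs_integral_norm (f := w) (a := x) (b := y)
          (μ := volume)
    have hsub : Set.uIoc x y ⊆ Set.uIoc a b := by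
      rw [uIoc_of_le hab.le]
      exact Set.Ioc_subset_Ioc (le_inf hx.1 hy.1) (sup_le hx.2 hy.2)
    have hWi : IntervalIntegrable W volume a b := hwi.abs
    have h2 : |∫ t in x..y, W t| ≤ |∫ t in a..b, W t| :=
      intervalIntegral.abs_integral_mono_interval hsub
        (Filter.Eventually.of_forall fun t => abs_nonneg _) hWi
    have h3 : |∫ t in a..b, W t| = ∫ t in a..b, W t :=
      abs_of_nonneg (intervalIntegral.integral_nonneg hab.le fun t _ => abs_nonneg _)
    calc |∫ t in x..y, w t| ≤ |∫ t in x..y, W t| := h1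
      _ ≤ |∫ t in a..b, W t| := h2
      _ = ∫ t in a..b, W t := h3
      _ ≤ Real.sqrt (b - a) * Real.sqrt S := habs
      _ = Real.sqrt ((b - a) * S) := (Real.sqrt_mul hba0 _).symm
  obtain ⟨ξ, hξ, hvξ⟩ := exists_hasDerivAt_eq_slope u v hab hucont
    (fun x hx => hu x (Ioo_subset_Icc_self hx))
  have hξ' : ξ ∈ Icc a b := Ioo_subset_Icc_self hξ
  have dbound : ∀ x ∈ Icc a b, |v x - c| ≤ Real.sqrt ((b - a) * S) := by
    intro x hx
    have hr := hrep ξ hξ' x hx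
    have : v x - c = ∫ t in ξ..x, w t := by rw [← hr, hvξ, hc]
    rw [this]
    exact key ξ hξ' x hx
  have ebound : ∀ x ∈ Icc a b,
      |u x - (u a + (x - a) * c)| ≤ (b - a) * Real.sqrt ((b - a) * S) := by
    intro x hx
    have hsub : Icc a x ⊆ Icc a b := Icc_subset_Icc le_rfl hx.2
    have hvint : IntervalIntegrable v volume a x :=
      (hvc.mono hsub).intervalIntegrable_of_Icc hx.1
    have hftc : ∫ t in a..x, v t = u x - u a :=
      integral_eq_sub_of_hasDerivAt
        (fun t ht => hu t (hsub (by rwa [uIcc_of_le hx.1] at ht))) hvint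
    have hrepr : u x - (u a + (x - a) * c) = ∫ t in a..x, (v t - c) := by
      rw [intervalIntegral.integral_sub hvint intervalIntegrable_const, hftc,
        intervalIntegral.integral_const, smul_eq_mul]
      ring
    have hb1 : ‖∫ t in a..x, (v t - c)‖ ≤ Real.sqrt ((b - a) * S) * |x - a| := by
      apply intervalIntegral.norm_integral_le_of_norm_le_const
      intro t ht
      rw [uIoc_of_le hx.1] at ht
      have ht' : t ∈ Icc a b := ⟨ht.1.le, ht.2.trans hx.2⟩
      simpa [Real.norm_eq_abs] using dbound t ht'
    have hxa : |x - a| ≤ b - a := by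
      rw [abs_of_nonneg (sub_nonneg.2 hx.1)]
      linarith [hx.2]
    calc |u x - (u a + (x - a) * c)| = ‖∫ t in a..x, (v t - c)‖ := by
          rw [hrepr, Real.norm_eq_abs]
      _ ≤ Real.sqrt ((b - a) * S) * |x - a| := hb1
      _ ≤ Real.sqrt ((b - a) * S) * (b - a) := by
          exact mul_le_mul_of_nonneg_left hxa (Real.sqrt_nonneg _)
      _ = (b - a) * Real.sqrt ((b - a) * S) := mul_comm _ _
  have hCb : ∀ x ∈ Icc a b,
      (u x - (u a + (x - a) * c)) ^ 2 + (v x - c) ^ 2 ≤ (b - a) ^ 3 * S + (b - a) * S := by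
    intro x hx
    have e1 := ebound x hx
    have e2 := dbound x hx
    have hsq : Real.sqrt ((b - a) * S) ^ 2 = (b - a) * S :=
      Real.sq_sqrt (mul_nonneg hba0 hS0)
    have q1 : (u x - (u a + (x - a) * c)) ^ 2 ≤ ((b - a) * Real.sqrt ((b - a) * S)) ^ 2 := by
      rw [← sq_abs]
      exact pow_le_pow_left₀ (abs_nonneg _) e1 2
    have q2 : (v x - c) ^ 2 ≤ Real.sqrt ((b - a) * S) ^ 2 := by
      rw [← sq_abs]
      exact pow_le_pow_left₀ (abs_nonneg _) e2 2
    have q1' : ((b - a) * Real.sqrt ((b - a) * S)) ^ 2 = (b - a) ^ 3 * S := by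
      rw [mul_pow, hsq]; ring
    rw [hsq] at q2
    rw [q1'] at q1
    linarith
  have hFi : IntervalIntegrable
      (fun x => (u x - (u a + (x - a) * c)) ^ 2 + (v x - c) ^ 2) volume a b := by
    apply ContinuousOn.intervalIntegrable
    rw [uIcc_of_le hab.le]
    exact ((hucont.sub (continuousOn_const.add
      ((continuousOn_id.sub continuousOn_const).mul continuousOn_const))).pow 2).add
      ((hvc.sub continuousOn_const).pow 2)
  calc ∫ x in a..b, ((u x - (u a + (x - a) * c)) ^ 2 + (v x - c) ^ 2)
      ≤ ∫ _x in a..b, ((b - a) ^ 3 * S + (b - a) * S) :=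
        intervalIntegral.integral_mono_on hab.le hFi intervalIntegrable_const hCb
    _ = (b - a) * ((b - a) ^ 3 * S + (b - a) * S) := by
        rw [intervalIntegral.integral_const, smul_eq_mul]
    _ = ((b - a) ^ 4 + (b - a) ^ 2) * S := by ring
private lemma sum_group (T : ℕ → ℝ) (q : ℕ) :
    ∀ n, ∑ i ∈ Finset.range (n * q), T i
      = ∑ m ∈ Finset.range n, ∑ k ∈ Finset.range q, T (m * q + k)
  | 0 => by simp
  | n + 1 => by
      rw [Nat.succ_mul, Finset.sum_range_add, sum_group T q n, Finset.sum_range_succ]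

/-- (Global piecewise-linear interpolation error, aligned case.)
Let `1/h, 1/L ∈ ℤ⁺` with `L/h ∈ ℤ⁺` (aligned configuration), let `u` have derivative
`v` on `[0,1]`, with `v` absolutely continuous on each `Ω_j = [(j−1)L, jL]` with
`u'' = w ∈ L²(Ω_j)`. Then the piecewise-linear interpolant `I_h u` on the grid
`x_i = ih` (written below via the floor function) satisfies
`‖u − I_h u‖_{H¹(0,1)} ≤ √(h⁴ + h²) · |u|_{H²}†` where
`|u|_{H²}† = (Σ_j ∫_{Ω_j} |u''|²)^{1/2}`. -/
theorem interpolation_error_aligned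
    (h L : ℝ) (nh nL q : ℕ) (hnh : 0 < nh) (hnL : 0 < nL) (hq : 0 < q)
    (hh : (nh : ℝ) * h = 1) (hL : (nL : ℝ) * L = 1)
    (haligned : nh = q * nL)
    (u v w : ℝ → ℝ)
    (hu : ∀ x ∈ Set.Icc (0:ℝ) 1, HasDerivAt u (v x) x)
    (hv_cont : ∀ j ∈ Finset.Icc 1 nL,
      ContinuousOn v (Set.Icc (((j : ℝ) - 1) * L) ((j : ℝ) * L)))
    (hv : ∀ j ∈ Finset.Icc 1 nL, ∀ x ∈ Set.Icc (((j : ℝ) - 1) * L) ((j : ℝ) * L),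
      v x = v (((j : ℝ) - 1) * L) + ∫ y in (((j : ℝ) - 1) * L)..x, w y)
    (hw_int : ∀ j ∈ Finset.Icc 1 nL,
      IntegrableOn w (Set.Ioo (((j : ℝ) - 1) * L) ((j : ℝ) * L)))
    (hw_sq : ∀ j ∈ Finset.Icc 1 nL,
      IntegrableOn (fun x => (w x) ^ 2) (Set.Ioo (((j : ℝ) - 1) * L) ((j : ℝ) * L))) :
    Real.sqrt (∫ x in Set.Ioo (0:ℝ) 1,
        ((u x - (u (h * ⌊x / h⌋) +
            (x - h * ⌊x / h⌋) * ((u (h * ⌊x / h⌋ + h) - u (h * ⌊x / h⌋)) / h))) ^ 2 +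
         (v x - (u (h * ⌊x / h⌋ + h) - u (h * ⌊x / h⌋)) / h) ^ 2))
      ≤ Real.sqrt (h ^ 4 + h ^ 2) *
        Real.sqrt (∑ j ∈ Finset.Icc 1 nL,
          ∫ x in Set.Ioo (((j : ℝ) - 1) * L) ((j : ℝ) * L), (w x) ^ 2) := by
  --
  have hnhR : (0:ℝ) < nh := by exact_mod_cast hnh
  have hnLR : (0:ℝ) < nL := by exact_mod_cast hnL
  have hpos : 0 < h := by nlinarith
  have hLpos : 0 < L := by nlinarith
  have hLq : L = q * h := by
    have h1 : (nL:ℝ) * ((q:ℝ) * h) = (nL:ℝ) * L := by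
      rw [haligned] at hh
      push_cast at hh
      rw [hL]
      nlinarith
    exact (mul_left_cancel₀ (ne_of_gt hnLR) h1).symm
  set F : ℝ → ℝ := fun x =>
      ((u x - (u (h * ⌊x / h⌋) +
          (x - h * ⌊x / h⌋) * ((u (h * ⌊x / h⌋ + h) - u (h * ⌊x / h⌋)) / h))) ^ 2 +
       (v x - (u (h * ⌊x / h⌋ + h) - u (h * ⌊x / h⌋)) / h) ^ 2) with hF
  set A : ℕ → ℝ := fun i => (i : ℝ) * h with hA
  have hAmono : Monotone A := by
    intro x y hxy
    simp only [hA]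
    have : (x:ℝ) ≤ (y:ℝ) := by exact_mod_cast hxy
    nlinarith
  have hcell : ∀ i, i < nh →
      IntervalIntegrable F volume (A i) (A (i+1)) ∧
      ∫ x in A i..A (i+1), F x
        ≤ (h ^ 4 + h ^ 2) * ∫ x in A i..A (i+1), w x ^ 2 := by
    intro i hi
    have hab : A i < A (i+1) := by
      simp only [hA]; push_cast; nlinarith
    have hba : A (i+1) - A i = h := by simp only [hA]; push_cast; ring
    have ha0 : 0 ≤ A i := by
      simp only [hA]; positivity
    have hb1 : A (i+1) ≤ 1 := by
      simp only [hA]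
      rw [← hh]
      have hile : ((i:ℝ)+1) ≤ (nh:ℝ) := by exact_mod_cast hi
      push_cast
      nlinarith
    set j := i / q with hj
    have hjq : j * q ≤ i := Nat.div_mul_le_self i q
    have hiq : i + 1 ≤ (j+1) * q := by
      have h1 : i % q < q := Nat.mod_lt _ hq
      have h2 : q * j + i % q = i := Nat.div_add_mod i q
      calc i + 1 = q * j + (i % q + 1) := by rw [← Nat.add_assoc, h2]
        _ ≤ q * j + q := Nat.add_le_add_left h1 _
        _ = (j + 1) * q := by ring
    have hjnL : j + 1 ≤ nL := by
      have hi' : i < nL * q := by rw [Nat.mul_comm]; rwa [haligned] at hi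
      exact Nat.succ_le_of_lt ((Nat.div_lt_iff_lt_mul hq).2 hi')
    have hjmem : j + 1 ∈ Finset.Icc 1 nL := Finset.mem_Icc.2 ⟨Nat.le_add_left 1 j, hjnL⟩
    have hC : (((j+1:ℕ):ℝ) - 1) * L = A (j * q) := by
      simp only [hA]; push_cast; rw [hLq]; ring
    have hD : ((j+1:ℕ):ℝ) * L = A ((j+1) * q) := by
      simp only [hA]; push_cast; rw [hLq]; ring
    have hCa : (((j+1:ℕ):ℝ) - 1) * L ≤ A i := by
      rw [hC]; exact hAmono hjq
    have hbD : A (i+1) ≤ ((j+1:ℕ):ℝ) * L := by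
      rw [hD]; exact hAmono hiq
    have hw_int' := hw_int (j+1) hjmem
    have hw_sq' := hw_sq (j+1) hjmem
    have hIccsub : Set.Icc (A i) (A (i+1)) ⊆
        Set.Icc (((((j+1:ℕ)):ℝ) - 1) * L) (((j+1:ℕ):ℝ) * L) := Set.Icc_subset_Icc hCa hbD
    have hwi_cell : IntervalIntegrable w volume (A i) (A (i+1)) :=
      ii_of_subIoo hw_int' hCa hab.le hbD
    have hws_cell : IntervalIntegrable (fun x => w x ^ 2) volume (A i) (A (i+1)) :=
      ii_of_subIoo hw_sq' hCa hab.le hbD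
    have hu_cell : ∀ x ∈ Set.Icc (A i) (A (i+1)), HasDerivAt u (v x) x :=
      fun x hx => hu x ⟨ha0.trans hx.1, hx.2.trans hb1⟩
    have hvc_cell : ContinuousOn v (Set.Icc (A i) (A (i+1))) :=
      (hv_cont (j+1) hjmem).mono hIccsub
    have hrep_cell : ∀ x ∈ Set.Icc (A i) (A (i+1)), ∀ y ∈ Set.Icc (A i) (A (i+1)),
        v y - v x = ∫ t in x..y, w t := by
      intro x hx y hy
      have hx' := hIccsub hx
      have hy' := hIccsub hy
      have i1 : IntervalIntegrable w volume (((((j+1:ℕ)):ℝ) - 1) * L) x :=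
        ii_of_subIoo hw_int' le_rfl hx'.1 hx'.2
      have i2 : IntervalIntegrable w volume (((((j+1:ℕ)):ℝ) - 1) * L) y :=
        ii_of_subIoo hw_int' le_rfl hy'.1 hy'.2
      have h4 := intervalIntegral.integral_interval_sub_left i2 i1
      rw [hv (j+1) hjmem x hx', hv (j+1) hjmem y hy']
      linarith
    have hbnd := cell_bound hab hu_cell hvc_cell hrep_cell hwi_cell hws_cell
    have hfloor : ∀ x ∈ Set.Ioo (A i) (A (i+1)), h * (⌊x / h⌋ : ℝ) = A i := by
      intro x hx
      have hx1 : (i:ℝ) * h < x := by simpa [hA] using hx.1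
      have hx2 : x < ((i:ℝ)+1) * h := by
        have h5 := hx.2
        simp only [hA] at h5
        push_cast at h5
        linarith
      have hfl : ⌊x / h⌋ = (i : ℤ) := by
        rw [Int.floor_eq_iff]
        constructor
        · push_cast
          exact (le_div_iff₀ hpos).2 (by nlinarith)
        · push_cast
          exact (div_lt_iff₀ hpos).2 (by nlinarith)
      rw [hfl]
      simp only [hA]
      push_cast
      ring
    have hEq : Set.EqOn (fun x =>
        ((u x - (u (A i) + (x - A i) * ((u (A (i+1)) - u (A i)) / (A (i+1) - A i)))) ^ 2 +
         (v x - (u (A (i+1)) - u (A i)) / (A (i+1) - A i)) ^ 2)) F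
        (Set.Ioo (A i) (A (i+1))) := by
      intro x hx
      have h1 := hfloor x hx
      have h3 : A i + h = A (i+1) := by simp only [hA]; push_cast; ring
      simp only [hF]
      rw [h1, h3, hba]
    have hGcont : ContinuousOn (fun x =>
        ((u x - (u (A i) + (x - A i) * ((u (A (i+1)) - u (A i)) / (A (i+1) - A i)))) ^ 2 +
         (v x - (u (A (i+1)) - u (A i)) / (A (i+1) - A i)) ^ 2))
        (Set.Icc (A i) (A (i+1))) := by
      have hucont : ContinuousOn u (Set.Icc (A i) (A (i+1))) :=
        fun x hx => (hu_cell x hx).continuousAt.continuousWithinAt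
      exact ((hucont.sub (((continuous_const.add ((continuous_id.sub
        continuous_const).mul continuous_const))).continuousOn)).pow 2).add
        ((hvc_cell.sub continuousOn_const).pow 2)
    have hGint : IntervalIntegrable (fun x =>
        ((u x - (u (A i) + (x - A i) * ((u (A (i+1)) - u (A i)) / (A (i+1) - A i)))) ^ 2 +
         (v x - (u (A (i+1)) - u (A i)) / (A (i+1) - A i)) ^ 2)) volume (A i) (A (i+1)) :=
      hGcont.intervalIntegrable_of_Icc hab.le
    constructor
    · rw [intervalIntegrable_iff, Set.uIoc_of_le hab.le,
        integrableOn_Ioc_iff_integrableOn_Ioo]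
      exact (hGint.1.mono_set Set.Ioo_subset_Ioc_self).congr_fun hEq measurableSet_Ioo
    · have hFeq : ∫ x in A i..A (i+1), F x = ∫ x in A i..A (i+1),
          ((u x - (u (A i) + (x - A i) * ((u (A (i+1)) - u (A i)) / (A (i+1) - A i)))) ^ 2 +
           (v x - (u (A (i+1)) - u (A i)) / (A (i+1) - A i)) ^ 2) := by
        rw [intervalIntegral.integral_of_le hab.le, intervalIntegral.integral_of_le hab.le,
          integral_Ioc_eq_integral_Ioo, integral_Ioc_eq_integral_Ioo]
        exact (setIntegral_congr_fun measurableSet_Ioo hEq).symm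
      rw [hFeq, show h ^ 4 + h ^ 2 = (A (i+1) - A i) ^ 4 + (A (i+1) - A i) ^ 2 by rw [hba]]
      exact hbnd
  have hStot0 : 0 ≤ ∑ j ∈ Finset.Icc 1 nL,
      ∫ x in Set.Ioo (((j : ℝ) - 1) * L) ((j : ℝ) * L), (w x) ^ 2 :=
    Finset.sum_nonneg fun j _ => setIntegral_nonneg measurableSet_Ioo fun x _ => sq_nonneg _
  have hmain : (∫ x in Set.Ioo (0:ℝ) 1, F x) ≤ (h ^ 4 + h ^ 2) *
      ∑ j ∈ Finset.Icc 1 nL,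
        ∫ x in Set.Ioo (((j : ℝ) - 1) * L) ((j : ℝ) * L), (w x) ^ 2 := by
    have hA0 : A 0 = 0 := by simp [hA]
    have hAnh : A nh = 1 := by simp only [hA]; exact hh
    have hsplit : ∫ x in (0:ℝ)..1, F x
        = ∑ i ∈ Finset.range nh, ∫ x in A i..A (i+1), F x := by
      have hs := intervalIntegral.sum_integral_adjacent_intervals
        (a := A) (μ := volume) (n := nh) (fun k hk => (hcell k hk).1)
      rw [hA0, hAnh] at hs
      exact hs.symm
    have hIoo : ∫ x in Set.Ioo (0:ℝ) 1, F x = ∫ x in (0:ℝ)..1, F x := by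
      rw [intervalIntegral.integral_of_le (by norm_num : (0:ℝ) ≤ 1),
        integral_Ioc_eq_integral_Ioo]
    have hsum_le : ∑ i ∈ Finset.range nh, ∫ x in A i..A (i+1), F x
        ≤ (h ^ 4 + h ^ 2) * ∑ i ∈ Finset.range nh, ∫ x in A i..A (i+1), w x ^ 2 := by
      rw [Finset.mul_sum]
      exact Finset.sum_le_sum fun i hi => (hcell i (Finset.mem_range.1 hi)).2
    have hregroup : ∑ i ∈ Finset.range nh, ∫ x in A i..A (i+1), w x ^ 2
        = ∑ j ∈ Finset.Icc 1 nL,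
            ∫ x in Set.Ioo (((j : ℝ) - 1) * L) ((j : ℝ) * L), (w x) ^ 2 := by
      have h0 : nh = nL * q := by rw [haligned, Nat.mul_comm]
      rw [h0, sum_group]
      have hinner : ∀ m ∈ Finset.range nL,
          ∑ k ∈ Finset.range q, ∫ x in A (m*q+k)..A (m*q+k+1), w x ^ 2
            = ∫ x in Set.Ioo (((((m+1:ℕ)):ℝ) - 1) * L) (((m+1:ℕ):ℝ) * L), (w x) ^ 2 := by
        intro m hm
        have hmem : m + 1 ∈ Finset.Icc 1 nL :=
          Finset.mem_Icc.2 ⟨Nat.le_add_left 1 m, Nat.succ_le_of_lt (Finset.mem_range.1 hm)⟩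
        have hC : ((((m+1:ℕ)):ℝ) - 1) * L = A (m*q) := by
          simp only [hA]; push_cast; rw [hLq]; ring
        have hD : (((m+1:ℕ)):ℝ) * L = A (m*q + q) := by
          simp only [hA]; push_cast; rw [hLq]; ring
        have hii : ∀ k, k < q → IntervalIntegrable (fun x => w x ^ 2) volume
            (A (m*q+k)) (A (m*q+k+1)) := by
          intro k hk
          refine ii_of_subIoo (hw_sq (m+1) hmem) ?_ (hAmono (by omega)) ?_
          · rw [hC]; exact hAmono (by omega)
          · rw [hD]; exact hAmono (by omega)
        have hs := intervalIntegral.sum_integral_adjacent_intervals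
          (a := fun k => A (m*q+k)) (μ := volume) (n := q) (fun k hk => hii k hk)
        calc ∑ k ∈ Finset.range q, ∫ x in A (m*q+k)..A (m*q+k+1), w x ^ 2
            = ∫ x in A (m*q)..A (m*q+q), w x ^ 2 := hs
          _ = ∫ x in Set.Ioo (((((m+1:ℕ)):ℝ) - 1) * L) (((m+1:ℕ):ℝ) * L), (w x) ^ 2 := by
              rw [hC, hD, intervalIntegral.integral_of_le (hAmono (by omega)),
                integral_Ioc_eq_integral_Ioo]
      rw [Finset.sum_congr rfl hinner]
      rw [show Finset.Icc 1 nL = Finset.Ico 1 (nL+1) from (Finset.Ico_add_one_right_eq_Icc 1 nL).symm,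
        Finset.sum_Ico_eq_sum_range]
      simp only [Nat.add_sub_cancel]
      refine Finset.sum_congr rfl fun m _ => ?_
      rw [Nat.add_comm 1 m]
    calc ∫ x in Set.Ioo (0:ℝ) 1, F x
        = ∑ i ∈ Finset.range nh, ∫ x in A i..A (i+1), F x := by rw [hIoo, hsplit]
      _ ≤ (h ^ 4 + h ^ 2) * ∑ i ∈ Finset.range nh, ∫ x in A i..A (i+1), w x ^ 2 := hsum_le
      _ = (h ^ 4 + h ^ 2) * ∑ j ∈ Finset.Icc 1 nL,
            ∫ x in Set.Ioo (((j : ℝ) - 1) * L) ((j : ℝ) * L), (w x) ^ 2 := by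
          rw [hregroup]
  rw [← Real.sqrt_mul (by positivity : (0:ℝ) ≤ h ^ 4 + h ^ 2)]
  exact Real.sqrt_le_sqrt hmain
end
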